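/- arXiv:2204.10187 — 6 statements merged into one kernel-verified Lean document; each statement's English description precedes it below -/
import Mathlib

section
/- Let X be an uncountable set with the co-countable topology. Then X is well-filtered: every filtered family of nonempty compact saturated subsets whose intersection is contained in an open set U has a member contained in U. -/
def SaturatedNL {X : Type*} [TopologicalSpace X] (s : Set X) : Prop :=
  s = ⋂₀ {U : Set X | IsOpen U ∧ s ⊆ U}

def WellFilteredNL (X : Type*) [TopologicalSpace X] : Prop :=
  ∀ 𝒦 : Set (Set X), 𝒦.Nonempty →
    (∀ K ∈ 𝒦, K.Nonempty ∧ IsCompact K ∧ SaturatedNL K) →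
    DirectedOn (· ⊇ ·) 𝒦 →
    ∀ U : Set X, IsOpen U → ⋂₀ 𝒦 ⊆ U → ∃ K ∈ 𝒦, K ⊆ U

lemma compact_finite_of_cocountable {X : Type*} [TopologicalSpace X]
    (hcoc : ∀ s : Set X, IsOpen s ↔ s = ∅ ∨ sᶜ.Countable)
    {K : Set X} (hK : IsCompact K) : K.Finite := by
  by_contra hinf
  have hinf' : K.Infinite := hinf
  let e := hinf'.natEmbedding
  set f : ℕ → X := fun n => (e n : X) with hf
  have hfK : ∀ n, f n ∈ K := fun n => (e n).2
  have hfi : Function.Injective f := fun a b h => by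
    have := e.injective (Subtype.ext h); exact this
  set U : ℕ → Set X := fun n => {x | ∃ m, n ≤ m ∧ x = f m}ᶜ with hU
  have hUo : ∀ n, IsOpen (U n) := by
    intro n
    rw [hcoc]
    right
    rw [compl_compl]
    have : {x | ∃ m, n ≤ m ∧ x = f m} ⊆ Set.range f := by
      rintro x ⟨m, _, rfl⟩; exact ⟨m, rfl⟩
    exact (Set.countable_range f).mono this
  have hcov : K ⊆ ⋃ n, U n := by
    intro x hx
    by_cases hxr : ∃ m, x = f m
    · obtain ⟨m, rfl⟩ := hxr
      refine Set.mem_iUnion.mpr ⟨m + 1, ?_⟩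
      rintro ⟨k, hk, hk'⟩
      have := hfi hk'
      omega
    · refine Set.mem_iUnion.mpr ⟨0, ?_⟩
      rintro ⟨k, _, hk'⟩
      exact hxr ⟨k, hk'⟩
  obtain ⟨t, ht⟩ := hK.elim_finite_subcover U hUo hcov
  obtain ⟨N, hN⟩ : ∃ N, ∀ n ∈ t, n ≤ N := ⟨t.sup id, fun n hn => Finset.le_sup (f := id) hn⟩
  have hmem := ht (hfK N)
  rw [Set.mem_iUnion₂] at hmem
  obtain ⟨n, hn, hn'⟩ := hmem
  exact hn' ⟨N, hN n hn, rfl⟩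

/-- An uncountable set with the co-countable topology is well-filtered. -/
theorem cocountable_well_filtered {X : Type*} [TopologicalSpace X]
    (hX : ¬ (Set.univ : Set X).Countable)
    (hcoc : ∀ s : Set X, IsOpen s ↔ s = ∅ ∨ sᶜ.Countable) :
    WellFilteredNL X := by
  intro 𝒦 hne hprop hdir U hU hsub
  have hfin : ∀ K ∈ 𝒦, K.Finite := fun K hK =>
    compact_finite_of_cocountable hcoc (hprop K hK).2.1
  -- pick a member of minimal cardinality
  set S : Set ℕ := {n | ∃ K ∈ 𝒦, K.ncard = n} with hS
  have hSne : S.Nonempty := by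
    obtain ⟨K, hK⟩ := hne
    exact ⟨K.ncard, K, hK, rfl⟩
  obtain ⟨K0, hK0, hcard⟩ := Nat.sInf_mem hSne
  have hmin : ∀ K ∈ 𝒦, K0 ⊆ K := by
    intro K hK
    obtain ⟨L, hL, hLK0, hLK⟩ := hdir K0 hK0 K hK
    have hL0 : L = K0 := by
      have h1 : sInf S ≤ L.ncard := Nat.sInf_le ⟨L, hL, rfl⟩
      have h2 : L.ncard ≤ K0.ncard :=
        Set.ncard_le_ncard hLK0 (hfin K0 hK0)
      have : L.ncard = K0.ncard := le_antisymm h2 (hcard ▸ h1)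
      exact Set.eq_of_subset_of_ncard_le hLK0 this.ge (hfin K0 hK0)
    exact hL0 ▸ hLK
  refine ⟨K0, hK0, fun x hx => hsub ?_⟩
  exact Set.mem_sInter.mpr fun K hK => hmin K hK hx
end

section
/- Let L = ℕ ∪ {⊤} be the poset obtained from the natural numbers with the usual order by adjoining a top element ⊤. Equip L with the topology whose closed sets are ∅, L, ℕ, and the sets ↓n for n ∈ ℕ. Then L is not a cut space: ℕ is a closed directed subset of L (with respect to the specialization order, which coincides with the given order) whose cut closure ℕ^δ = L is strictly larger than its closure ℕ. -/
/-- Let `L = ℕ ∪ {⊤}` carry the topology whose closed sets are `∅`, `L`, `ℕ` and the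
principal down-sets `↓n` for `n ∈ ℕ`.  Then the specialization order coincides with the
given order, and `ℕ` is a closed directed subset whose cut closure is all of `L`,
strictly larger than its topological closure `ℕ`; hence `L` is not a cut space. -/
theorem L_not_cut_space [τ : TopologicalSpace (WithTop ℕ)]
    (hτ : ∀ s : Set (WithTop ℕ), IsClosed s ↔
      s = ∅ ∨ s = Set.univ ∨ s = {x : WithTop ℕ | x ≠ ⊤} ∨
        ∃ n : ℕ, s = Set.Iic (n : WithTop ℕ)) :
    (∀ x y : WithTop ℕ, x ∈ closure {y} ↔ x ≤ y) ∧
    IsClosed {x : WithTop ℕ | x ≠ ⊤} ∧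
    ({x : WithTop ℕ | x ≠ ⊤}).Nonempty ∧
    DirectedOn (· ≤ ·) {x : WithTop ℕ | x ≠ ⊤} ∧
    closure {x : WithTop ℕ | x ≠ ⊤} = {x : WithTop ℕ | x ≠ ⊤} ∧
    lowerBounds (upperBounds {x : WithTop ℕ | x ≠ ⊤}) = Set.univ ∧
    {x : WithTop ℕ | x ≠ ⊤} ≠ Set.univ := by
  have hclosedN : IsClosed {x : WithTop ℕ | x ≠ ⊤} := by
    rw [hτ]; exact Or.inr (Or.inr (Or.inl rfl))
  -- every closed set is a lower set
  have hlower : ∀ s : Set (WithTop ℕ), IsClosed s → IsLowerSet s := by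
    intro s hs
    rcases (hτ s).mp hs with rfl | rfl | rfl | ⟨n, rfl⟩
    · intro a b _ h; exact h
    · intro a b _ _; trivial
    · intro a b hab hb
      simp only [Set.mem_setOf_eq] at *
      intro ha; subst ha
      exact hb (top_le_iff.mp hab)
    · intro a b hab hb; exact le_trans hab hb
  constructor
  · intro x y
    constructor
    · intro hx
      cases y with
      | top => exact le_top
      | coe n =>
        have hc : IsClosed (Set.Iic (n : WithTop ℕ)) := by
          rw [hτ]; exact Or.inr (Or.inr (Or.inr ⟨n, rfl⟩))
        exact closure_minimal (by simp) hc hx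
    · intro hxy
      exact hlower _ isClosed_closure hxy (subset_closure rfl)
  refine ⟨hclosedN, ⟨0, by simp⟩, ?_, hclosedN.closure_eq, ?_, ?_⟩
  · intro a ha b hb
    exact ⟨max a b, by
      simp only [Set.mem_setOf_eq] at *
      exact ⟨by simp [max_eq_top, ha, hb], le_max_left _ _, le_max_right _ _⟩⟩
  · have hub : upperBounds {x : WithTop ℕ | x ≠ ⊤} = {⊤} := by
      apply Set.eq_singleton_iff_unique_mem.mpr
      constructor
      · intro x _; exact le_top
      · intro b hb
        by_contra hbt
        cases b with
        | top => exact hbt rfl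
        | coe n =>
          have := hb (show ((n+1 : ℕ) : WithTop ℕ) ∈ _ by simp)
          have h2 : n + 1 ≤ n := Nat.cast_le.mp this
          omega
    rw [hub]
    ext x
    simp [lowerBounds, le_top]
  · intro h
    have : (⊤ : WithTop ℕ) ∈ {x : WithTop ℕ | x ≠ ⊤} := h ▸ Set.mem_univ _
    exact this rfl
end

section
/- Let 𝕁 = ℕ × (ℕ ∪ {∞}) be Johnstone's poset, ordered by (j,k) ≤ (m,n) iff (j = m and k ≤ n) or (n = ∞ and k ≤ m). Then 𝕁 is a dcpo and the closure of any directed subset D in the Scott topology on 𝕁 equals ↓(⋁D); in particular no directed subset of 𝕁 has Scott closure equal to all of 𝕁, since 𝕁 has no greatest element. -/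
/-- A point of Johnstone's poset `𝕁 = ℕ × (ℕ ∪ {∞})`. -/
@[ext]
structure JPt where
  n : ℕ
  m : WithTop ℕ

/-- The Johnstone order: `(j,k) ≤ (m,n)` iff (`j = m` and `k ≤ n`) or
(`n = ∞` and `k ≤ m`). -/
instance : PartialOrder JPt where
  le a b := (a.n = b.n ∧ a.m ≤ b.m) ∨ (b.m = ⊤ ∧ a.m ≤ (b.n : WithTop ℕ))
  le_refl a := Or.inl ⟨rfl, le_rfl⟩
  le_trans a b c hab hbc := by
    rcases hab with ⟨h1, h2⟩ | ⟨h1, h2⟩ <;> rcases hbc with ⟨h3, h4⟩ | ⟨h3, h4⟩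
    · exact Or.inl ⟨h1.trans h3, h2.trans h4⟩
    · exact Or.inr ⟨h3, h2.trans h4⟩
    · exact Or.inr ⟨top_le_iff.mp (h1 ▸ h4), h3 ▸ h2⟩
    · exact absurd (h1 ▸ h4) (by simp)
  le_antisymm a b hab hba := by
    rcases hab with ⟨h1, h2⟩ | ⟨h1, h2⟩ <;> rcases hba with ⟨h3, h4⟩ | ⟨h3, h4⟩
    · exact JPt.ext h1 (le_antisymm h2 h4)
    · exact absurd (le_trans (h3 ▸ h2) h4) (by simp)
    · exact absurd (le_trans (h1 ▸ h4) h2) (by simp)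
    · exact absurd (h1 ▸ h4) (by simp)

/-- The Scott-open sets: upper sets inaccessible by suprema of directed sets. -/
def ScottOpenNL {P : Type*} [PartialOrder P] (U : Set P) : Prop :=
  IsUpperSet U ∧ ∀ D : Set P, D.Nonempty → DirectedOn (· ≤ ·) D →
    ∀ a : P, IsLUB D a → a ∈ U → (D ∩ U).Nonempty

-- inserted before theorem
lemma JPt.le_def {a b : JPt} : a ≤ b ↔ (a.n = b.n ∧ a.m ≤ b.m) ∨ (b.m = ⊤ ∧ a.m ≤ (b.n : WithTop ℕ)) := Iff.rfl

lemma JPt.top_le {z w : JPt} (hz : z.m = ⊤) (h : z ≤ w) : w = z := by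
  rcases h with ⟨h1, h2⟩ | ⟨h1, h2⟩
  · exact JPt.ext h1.symm ((top_le_iff.mp (hz ▸ h2)).trans hz.symm)
  · exact absurd (hz ▸ h2) (by simp)

lemma JPt.exists_lub (D : Set JPt) (hne : D.Nonempty) (hD : DirectedOn (· ≤ ·) D) :
    ∃ a : JPt, IsLUB D a := by
  obtain ⟨d, hd⟩ := hne
  by_cases htop : ∃ x ∈ D, ∀ y ∈ D, y ≤ x
  · obtain ⟨x, hx, hxt⟩ := htop
    exact ⟨x, fun y hy => hxt y hy, fun b hb => hb hx⟩
  · have hcol : ∀ y ∈ D, y.n = d.n := by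
      intro y hy
      by_contra hne'
      obtain ⟨z, hz, hyz, hdz⟩ := hD y hy d hd
      have hzm : z.m = ⊤ := by
        rcases hyz with ⟨h1, h2⟩ | ⟨h1, _⟩
        · rcases hdz with ⟨h3, _⟩ | ⟨h3, _⟩
          · exact absurd (h1.trans h3.symm) hne'
          · exact h3
        · exact h1
      refine htop ⟨z, hz, fun a ha => ?_⟩
      obtain ⟨w, hw, haw, hzw⟩ := hD a ha z hz
      exact (JPt.top_le hzm hzw) ▸ haw
    refine ⟨⟨d.n, sSup (JPt.m '' D)⟩, fun y hy => Or.inl ⟨hcol y hy, le_sSup ⟨y, hy, rfl⟩⟩, ?_⟩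
    intro b hb
    by_cases hbn : b.n = d.n
    · refine Or.inl ⟨hbn.symm, sSup_le ?_⟩
      rintro _ ⟨y, hy, rfl⟩
      rcases hb hy with ⟨_, h2⟩ | ⟨h1, _⟩
      · exact h2
      · exact h1 ▸ le_top
    · have hbm : b.m = ⊤ := by
        rcases hb hd with ⟨h1, _⟩ | ⟨h1, _⟩
        · exact absurd h1.symm hbn
        · exact h1
      refine Or.inr ⟨hbm, sSup_le ?_⟩
      rintro _ ⟨y, hy, rfl⟩
      rcases hb hy with ⟨h1, _⟩ | ⟨_, h2⟩
      · exact absurd (h1.symm.trans (hcol y hy)) hbn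
      · exact h2

lemma JPt.no_top : ¬ ∃ t : JPt, ∀ x : JPt, x ≤ t := by
  rintro ⟨t, ht⟩
  rcases ht ⟨t.n + 1, ⊤⟩ with ⟨h1, _⟩ | ⟨_, h2⟩
  · exact Nat.succ_ne_self t.n h1
  · exact absurd h2 (by simp)

/-- Johnstone's poset `𝕁` is a dcpo, the Scott closure of any directed subset `D`
is `↓(⋁D)`, and no directed subset has Scott closure equal to all of `𝕁`
(since `𝕁` has no greatest element). -/
theorem johnstone_dcpo_and_directed_closures [τ : TopologicalSpace JPt]
    (hτ : ∀ U : Set JPt, IsOpen U ↔ ScottOpenNL U) :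
    (∀ D : Set JPt, D.Nonempty → DirectedOn (· ≤ ·) D → ∃ a : JPt, IsLUB D a) ∧
    (∀ D : Set JPt, D.Nonempty → DirectedOn (· ≤ ·) D →
      ∀ a : JPt, IsLUB D a → closure D = Set.Iic a) ∧
    (¬ ∃ t : JPt, ∀ x : JPt, x ≤ t) ∧
    (¬ ∃ D : Set JPt, D.Nonempty ∧ DirectedOn (· ≤ ·) D ∧ closure D = Set.univ) := by
  have hclosed : ∀ a : JPt, IsClosed (Set.Iic a) := by
    intro a
    rw [← isOpen_compl_iff, hτ]
    refine ⟨(isLowerSet_Iic a).compl, ?_⟩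
    intro E hE hdE b hb hbU
    by_contra h
    rw [Set.not_nonempty_iff_eq_empty] at h
    have hsub : E ⊆ Set.Iic a := fun x hx => by
      by_contra hxa
      exact absurd (Set.mem_inter hx hxa) (h ▸ Set.notMem_empty x)
    exact hbU (hb.2 fun x hx => hsub hx)
  have hcl : ∀ D : Set JPt, D.Nonempty → DirectedOn (· ≤ ·) D →
      ∀ a : JPt, IsLUB D a → closure D = Set.Iic a := by
    intro D hne hD a ha
    apply le_antisymm
    · exact closure_minimal (fun x hx => ha.1 hx) (hclosed a)
    · intro x hx
      by_contra hxc
      have hopen : IsOpen (closure D)ᶜ := (isClosed_closure).isOpen_compl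
      rw [hτ] at hopen
      have haU : a ∈ (closure D)ᶜ := hopen.1 hx hxc
      obtain ⟨y, hyD, hyU⟩ := hopen.2 D hne hD a ha haU
      exact hyU (subset_closure hyD)
  refine ⟨JPt.exists_lub, hcl, JPt.no_top, ?_⟩
  rintro ⟨D, hne, hD, hclu⟩
  obtain ⟨a, ha⟩ := JPt.exists_lub D hne hD
  refine JPt.no_top ⟨a, fun x => ?_⟩
  have := hcl D hne hD a ha
  rw [hclu] at this
  have hx : x ∈ Set.Iic a := this ▸ Set.mem_univ x
  exact hx
end

section
/- Let 𝕁 = ℕ × (ℕ ∪ {∞}) be Johnstone's poset, ordered by (j,k) ≤ (m,n) iff (j = m and k ≤ n) or (n = ∞ and k ≤ m). Then the whole set 𝕁 is an irreducible closed subset of the Scott space Σ𝕁, and consequently Σ𝕁 is not sober (𝕁 has no greatest element, so 𝕁 is not a point closure). -/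
def IsIrredNL {X : Type*} [TopologicalSpace X] (A : Set X) : Prop :=
  A.Nonempty ∧ ∀ F₁ F₂ : Set X, IsClosed F₁ → IsClosed F₂ → A ⊆ F₁ ∪ F₂ → A ⊆ F₁ ∨ A ⊆ F₂

/-- A space is sober if every irreducible closed set is the closure of a unique point. -/
def SoberNL (X : Type*) [TopologicalSpace X] : Prop :=
  ∀ A : Set X, IsClosed A → IsIrredNL A → ∃! x : X, A = closure {x}

lemma jpt_le_def (a b : JPt) :
    a ≤ b ↔ (a.n = b.n ∧ a.m ≤ b.m) ∨ (b.m = ⊤ ∧ a.m ≤ (b.n : WithTop ℕ)) := Iff.rfl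

lemma scott_open_cofinal {U : Set JPt} (hU : ScottOpenNL U) (hne : U.Nonempty) :
    ∃ N : ℕ, ∀ m : ℕ, N ≤ m → (⟨m, ⊤⟩ : JPt) ∈ U := by
  suffices h : ∃ p : JPt, p.m ≠ ⊤ ∧ p ∈ U by
    obtain ⟨⟨j', k'⟩, hk', hU'⟩ := h
    lift k' to ℕ using hk'
    exact ⟨k', fun m hm => hU.1 (Or.inr ⟨rfl, show (k' : WithTop ℕ) ≤ (m : WithTop ℕ) by exact_mod_cast hm⟩) hU'⟩
  obtain ⟨⟨j, k⟩, hjk⟩ := hne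
  by_cases hk : k = ⊤
  · subst hk
    set D : Set JPt := {p | ∃ i : ℕ, p = ⟨j, (i : WithTop ℕ)⟩} with hD
    have hDne : D.Nonempty := ⟨⟨j, 0⟩, 0, rfl⟩
    have hDdir : DirectedOn (· ≤ ·) D := by
      rintro _ ⟨i₁, rfl⟩ _ ⟨i₂, rfl⟩
      exact ⟨⟨j, max i₁ i₂⟩, ⟨max i₁ i₂, rfl⟩,
        Or.inl ⟨rfl, by exact_mod_cast le_max_left _ _⟩,
        Or.inl ⟨rfl, by exact_mod_cast le_max_right _ _⟩⟩
    have hlub : IsLUB D ⟨j, ⊤⟩ := by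
      constructor
      · rintro _ ⟨i, rfl⟩; exact Or.inl ⟨rfl, le_top⟩
      · rintro ⟨bn, bm⟩ hb
        by_cases hbm : bm = ⊤
        · subst hbm
          by_cases hj : j = bn
          · exact Or.inl ⟨hj, le_rfl⟩
          · exfalso
            rcases hb ⟨bn + 1, rfl⟩ with ⟨h1, _⟩ | ⟨_, h2⟩
            · exact hj h1
            · exact absurd h2 (show ¬((bn + 1 : ℕ) : WithTop ℕ) ≤ (bn : WithTop ℕ) by exact_mod_cast Nat.not_succ_le_self bn)
        · exfalso
          lift bm to ℕ using hbm
          rcases hb ⟨bm + 1, rfl⟩ with ⟨_, h2⟩ | ⟨h1, _⟩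
          · exact absurd h2 (show ¬((bm + 1 : ℕ) : WithTop ℕ) ≤ (bm : WithTop ℕ) by exact_mod_cast Nat.not_succ_le_self bm)
          · exact absurd h1 (by simp)
    obtain ⟨d, hdD, hdU⟩ := hU.2 D hDne hDdir _ hlub hjk
    obtain ⟨i, rfl⟩ := hdD
    exact ⟨⟨j, i⟩, by simp, hdU⟩
  · exact ⟨⟨j, k⟩, hk, hjk⟩

lemma jpt_no_le_succ_top (x : JPt) : ¬ ((⟨x.n + 1, ⊤⟩ : JPt) ≤ x) := by
  rintro (⟨h1, _⟩ | ⟨_, h2⟩)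
  · exact Nat.succ_ne_self x.n h1
  · exact absurd h2 (by simp)

/-- In the Scott topology on Johnstone's poset `𝕁`, the whole space is an irreducible
closed set which is not a point closure (`𝕁` has no greatest element); hence `Σ𝕁` is
not sober. -/
theorem johnstone_scott_not_sober [τ : TopologicalSpace JPt]
    (hτ : ∀ U : Set JPt, IsOpen U ↔ ScottOpenNL U) :
    IsClosed (Set.univ : Set JPt) ∧ IsIrredNL (Set.univ : Set JPt) ∧
    (¬ ∃ t : JPt, ∀ x : JPt, x ≤ t) ∧
    (∀ x : JPt, closure {x} ≠ Set.univ) ∧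
    ¬ SoberNL JPt := by
  have hirred : IsIrredNL (Set.univ : Set JPt) := by
    refine ⟨⟨⟨0, 0⟩, trivial⟩, fun F₁ F₂ h₁ h₂ hsub => ?_⟩
    by_contra h
    push_neg at h
    obtain ⟨h₁', h₂'⟩ := h
    obtain ⟨x₁, -, hx₁⟩ := Set.not_subset.mp h₁'
    obtain ⟨x₂, -, hx₂⟩ := Set.not_subset.mp h₂'
    obtain ⟨N₁, hN₁⟩ := scott_open_cofinal ((hτ _).mp h₁.isOpen_compl) ⟨x₁, hx₁⟩
    obtain ⟨N₂, hN₂⟩ := scott_open_cofinal ((hτ _).mp h₂.isOpen_compl) ⟨x₂, hx₂⟩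
    rcases hsub (Set.mem_univ (⟨max N₁ N₂, ⊤⟩ : JPt)) with hm | hm
    · exact hN₁ _ (le_max_left _ _) hm
    · exact hN₂ _ (le_max_right _ _) hm
  have hnotop : ¬ ∃ t : JPt, ∀ x : JPt, x ≤ t := by
    rintro ⟨t, ht⟩
    exact jpt_no_le_succ_top t (ht _)
  have hncl : ∀ x : JPt, closure {x} ≠ Set.univ := by
    intro x hcl
    have hclosed : IsClosed {y : JPt | y ≤ x} := by
      rw [← isOpen_compl_iff, hτ]
      constructor
      · intro a b hab ha hb
        exact ha (hab.trans hb)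
      · intro D hne hdir a hlub ha
        by_contra hcon
        rw [Set.not_nonempty_iff_eq_empty] at hcon
        refine ha (hlub.2 fun d hd => ?_)
        by_contra hdx
        exact Set.eq_empty_iff_forall_notMem.mp hcon d ⟨hd, hdx⟩
    have hsub : closure {x} ⊆ {y : JPt | y ≤ x} :=
      closure_minimal (by simp) hclosed
    have : (⟨x.n + 1, ⊤⟩ : JPt) ∈ closure {x} := hcl ▸ Set.mem_univ _
    exact jpt_no_le_succ_top x (hsub this)
  refine ⟨isClosed_univ, hirred, hnotop, hncl, fun hs => ?_⟩
  obtain ⟨x, hx, -⟩ := hs Set.univ isClosed_univ hirred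
  exact hncl x hx.symm
end

section
/- Let 𝕁 be Johnstone's dcpo with maximal elements 𝕁_max = { (n,∞) : n ∈ ℕ }. Then every subset of 𝕁_max is compact in the Scott topology of 𝕁, and the filtered family { 𝕁_max \ F : F a finite subset of 𝕁_max } of nonempty compact saturated sets has empty intersection; hence Σ𝕁 is not well-filtered. -/
/-- The set of maximal elements of Johnstone's poset. -/
def Jmax : Set JPt := {x : JPt | x.m = ⊤}

lemma jmax_eq {y x : JPt} (hy : y.m = ⊤) (h : y ≤ x) : y = x := by
  rcases h with ⟨h1, h2⟩ | ⟨h1, h2⟩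
  · exact JPt.ext h1 (le_antisymm h2 (hy ▸ le_top))
  · rw [hy] at h2
    exact absurd (top_le_iff.mp h2) (by simp)

lemma scott_tail (U : Set JPt) (hU : ScottOpenNL U) (n : ℕ)
    (h : (⟨n, ⊤⟩ : JPt) ∈ U) : ∃ k : ℕ, ∀ m, k ≤ m → (⟨m, ⊤⟩ : JPt) ∈ U := by
  set D : Set JPt := Set.range (fun k : ℕ => (⟨n, (k : WithTop ℕ)⟩ : JPt)) with hD
  have hlub : IsLUB D ⟨n, ⊤⟩ := by
    constructor
    · rintro p ⟨k, rfl⟩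
      exact Or.inl ⟨rfl, le_top⟩
    · intro b hb
      have h1 : n = b.n := by
        have hmem := hb ⟨b.n + 1, rfl⟩
        rcases hmem with ⟨h1, _⟩ | ⟨_, h2⟩
        · exact h1
        · exact absurd (Nat.cast_le.mp h2) (by omega)
      have h2 : b.m = ⊤ := by
        by_contra hne
        obtain ⟨j, hj⟩ := Option.ne_none_iff_exists'.mp hne
        have hmem := hb ⟨j + 1, rfl⟩
        rcases hmem with ⟨_, h2⟩ | ⟨h2, _⟩
        · rw [hj] at h2
          exact absurd (Nat.cast_le.mp h2) (by omega)
        · exact absurd h2 hne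
      exact Or.inl ⟨h1, top_le_iff.mpr h2⟩
  have hdir : DirectedOn (· ≤ ·) D := by
    rintro a ⟨j, rfl⟩ b ⟨k, rfl⟩
    exact ⟨⟨n, ((max j k : ℕ) : WithTop ℕ)⟩, ⟨max j k, rfl⟩,
      Or.inl ⟨rfl, Nat.cast_le.mpr (le_max_left _ _)⟩,
      Or.inl ⟨rfl, Nat.cast_le.mpr (le_max_right _ _)⟩⟩
  obtain ⟨d, hdD, hdU⟩ := hU.2 D ⟨_, ⟨0, rfl⟩⟩ hdir _ hlub h
  obtain ⟨k, rfl⟩ := hdD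
  exact ⟨k, fun m hm => hU.1 (Or.inr ⟨rfl, Nat.cast_le.mpr hm⟩) hdU⟩

lemma compl_down_open (x : JPt) : ScottOpenNL {y : JPt | ¬ y ≤ x} := by
  constructor
  · intro a b hab ha
    exact fun hb => ha (hab.trans hb)
  · intro D hD hdir a hlub haU
    by_contra hne
    rw [Set.not_nonempty_iff_eq_empty] at hne
    apply haU
    apply hlub.2
    intro d hd
    by_contra hdx
    exact absurd (show d ∈ (∅ : Set JPt) by rw [← hne]; exact ⟨hd, hdx⟩) (Set.notMem_empty d)

lemma compact_of_sub_Jmax [τ : TopologicalSpace JPt]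
    (hτ : ∀ U : Set JPt, IsOpen U ↔ ScottOpenNL U)
    (K : Set JPt) (hK : K ⊆ Jmax) : IsCompact K := by
  apply isCompact_of_finite_subcover
  intro ι U hUo hcov
  classical
  rcases K.eq_empty_or_nonempty with rfl | ⟨x, hx⟩
  · exact ⟨∅, by simp⟩
  obtain ⟨i0, hi0⟩ := Set.mem_iUnion.mp (hcov hx)
  have hxm : x = ⟨x.n, ⊤⟩ := JPt.ext rfl (hK hx)
  obtain ⟨k, hk⟩ := scott_tail (U i0) ((hτ _).mp (hUo i0)) x.n (hxm ▸ hi0)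
  have hch : ∀ m : ℕ, ∃ i : ι, (⟨m, ⊤⟩ : JPt) ∈ K → (⟨m, ⊤⟩ : JPt) ∈ U i := by
    intro m
    by_cases hm : (⟨m, ⊤⟩ : JPt) ∈ K
    · obtain ⟨i, hi⟩ := Set.mem_iUnion.mp (hcov hm)
      exact ⟨i, fun _ => hi⟩
    · exact ⟨i0, fun h => absurd h hm⟩
  choose f hf using hch
  refine ⟨insert i0 ((Finset.range k).image f), fun y hy => ?_⟩
  have hym : y = ⟨y.n, ⊤⟩ := JPt.ext rfl (hK hy)
  rcases le_or_gt k y.n with h | h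
  · refine Set.mem_biUnion (Finset.mem_insert_self _ _) ?_
    rw [hym]
    exact hk y.n h
  · refine Set.mem_biUnion (Finset.mem_insert_of_mem
      (Finset.mem_image_of_mem f (Finset.mem_range.mpr h))) ?_
    rw [hym]
    exact hf y.n (hym ▸ hy)

lemma saturated_of_sub_Jmax [τ : TopologicalSpace JPt]
    (hτ : ∀ U : Set JPt, IsOpen U ↔ ScottOpenNL U)
    (s : Set JPt) (hs : s ⊆ Jmax) : SaturatedNL s := by
  apply Set.Subset.antisymm
  · intro x hx
    exact fun U hU => hU.2 hx
  · intro x hx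
    by_contra hxs
    have hUopen : IsOpen {y : JPt | ¬ y ≤ x} := (hτ _).mpr (compl_down_open x)
    have hsU : s ⊆ {y : JPt | ¬ y ≤ x} := fun y hy hle =>
      hxs ((jmax_eq (hs hy) hle) ▸ hy)
    exact (Set.mem_sInter.mp hx _ ⟨hUopen, hsU⟩) le_rfl

lemma jmax_diff_nonempty (F : Set JPt) (hF : F.Finite) : (Jmax \ F).Nonempty := by
  have hinj : Set.InjOn (fun n : ℕ => (⟨n, ⊤⟩ : JPt)) Set.univ := by
    intro a _ b _ h
    exact congrArg JPt.n h
  have hG : Set.Finite ((fun n : ℕ => (⟨n, ⊤⟩ : JPt)) ⁻¹' F) :=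
    Set.Finite.preimage (hinj.mono (Set.subset_univ _)) hF
  obtain ⟨n, hn⟩ := hG.infinite_compl.nonempty
  exact ⟨⟨n, ⊤⟩, rfl, hn⟩


/-- In the Scott topology on Johnstone's poset, every subset of `Jmax` is compact,
the filtered family of cofinite subsets of `Jmax` consists of nonempty compact
saturated sets and has empty intersection; hence `Σ𝕁` is not well-filtered. -/
theorem johnstone_scott_not_well_filtered [τ : TopologicalSpace JPt]
    (hτ : ∀ U : Set JPt, IsOpen U ↔ ScottOpenNL U) :
    (∀ K : Set JPt, K ⊆ Jmax → IsCompact K) ∧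
    DirectedOn (· ⊇ ·) {s : Set JPt | ∃ F : Set JPt, F.Finite ∧ F ⊆ Jmax ∧ s = Jmax \ F} ∧
    (∀ s ∈ {s : Set JPt | ∃ F : Set JPt, F.Finite ∧ F ⊆ Jmax ∧ s = Jmax \ F},
        s.Nonempty ∧ IsCompact s ∧ SaturatedNL s) ∧
    ⋂₀ {s : Set JPt | ∃ F : Set JPt, F.Finite ∧ F ⊆ Jmax ∧ s = Jmax \ F} = ∅ ∧
    ¬ WellFilteredNL JPt := by
  set 𝒦 : Set (Set JPt) :=
    {s : Set JPt | ∃ F : Set JPt, F.Finite ∧ F ⊆ Jmax ∧ s = Jmax \ F} with h𝒦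
  have hcomp : ∀ K : Set JPt, K ⊆ Jmax → IsCompact K := compact_of_sub_Jmax hτ
  have hdir : DirectedOn (· ⊇ ·) 𝒦 := by
    rintro s ⟨F1, hF1, hF1s, rfl⟩ t ⟨F2, hF2, hF2s, rfl⟩
    exact ⟨Jmax \ (F1 ∪ F2), ⟨F1 ∪ F2, hF1.union hF2, Set.union_subset hF1s hF2s, rfl⟩,
      Set.diff_subset_diff_right Set.subset_union_left,
      Set.diff_subset_diff_right Set.subset_union_right⟩
  have hmem : ∀ s ∈ 𝒦, s.Nonempty ∧ IsCompact s ∧ SaturatedNL s := by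
    rintro s ⟨F, hF, hFs, rfl⟩
    exact ⟨jmax_diff_nonempty F hF, hcomp _ Set.diff_subset,
      saturated_of_sub_Jmax hτ _ Set.diff_subset⟩
  have hint : ⋂₀ 𝒦 = ∅ := by
    rw [Set.eq_empty_iff_forall_notMem]
    intro x hx
    by_cases hxJ : x ∈ Jmax
    · exact (Set.mem_sInter.mp hx _ ⟨{x}, Set.finite_singleton x,
        Set.singleton_subset_iff.mpr hxJ, rfl⟩).2 rfl
    · exact hxJ (Set.mem_sInter.mp hx _ ⟨∅, Set.finite_empty,
        Set.empty_subset _, (Set.diff_empty).symm⟩)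
  refine ⟨hcomp, hdir, hmem, hint, ?_⟩
  intro hwf
  obtain ⟨K, hK𝒦, hKsub⟩ := hwf 𝒦 ⟨Jmax, ∅, Set.finite_empty, Set.empty_subset _,
    (Set.diff_empty).symm⟩ hmem hdir ∅ isOpen_empty (hint ▸ Set.Subset.rfl)
  exact Set.not_nonempty_empty (Set.Nonempty.mono hKsub (hmem K hK𝒦).1)
end

section
/- For any T0 space X, the Hoare power space P_H(X), consisting of all nonempty closed subsets of X with the lower Vietoris topology (generated by the sets ◇U = { A closed nonempty : A ∩ U ≠ ∅ } for U open), is a sober space. -/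
/-- The Hoare power space of `X`: the nonempty closed subsets of `X`. -/
def HoarePS (X : Type*) [TopologicalSpace X] : Type _ :=
  {A : Set X // IsClosed A ∧ A.Nonempty}

/-- The lower Vietoris topology, generated by the sets
`◇U = {A : A ∩ U ≠ ∅}` for `U` open in `X`. -/
instance (X : Type*) [TopologicalSpace X] : TopologicalSpace (HoarePS X) :=
  TopologicalSpace.generateFrom
    {S : Set (HoarePS X) | ∃ U : Set X, IsOpen U ∧ S = {A : HoarePS X | (A.1 ∩ U).Nonempty}}

lemma hoare_open_upward {X : Type*} [TopologicalSpace X] {V : Set (HoarePS X)}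
    (hV : IsOpen V) {A B : HoarePS X} (hAB : A.1 ⊆ B.1) (hA : A ∈ V) : B ∈ V := by
  induction hV with
  | basic s hs =>
    obtain ⟨U, -, rfl⟩ := hs
    exact hA.mono (Set.inter_subset_inter_left U hAB)
  | univ => trivial
  | inter s t _ _ ihs iht => exact ⟨ihs hA.1, iht hA.2⟩
  | sUnion S _ ih =>
    obtain ⟨s, hs, hAs⟩ := hA
    exact ⟨s, hs, ih s hs hAs⟩

lemma hoare_closure_singleton {X : Type*} [TopologicalSpace X] (B : HoarePS X) :
    closure {B} = {A : HoarePS X | A.1 ⊆ B.1} := by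
  ext A
  constructor
  · intro hA
    intro x hx
    by_contra hxB
    have hopen : IsOpen {C : HoarePS X | (C.1 ∩ B.1ᶜ).Nonempty} :=
      TopologicalSpace.GenerateOpen.basic _ ⟨B.1ᶜ, B.2.1.isOpen_compl, rfl⟩
    have := mem_closure_iff.mp hA _ hopen ⟨x, hx, hxB⟩
    obtain ⟨C, hC1, hC2⟩ := this
    rw [Set.mem_singleton_iff] at hC2
    subst hC2
    obtain ⟨y, hy1, hy2⟩ := hC1
    exact hy2 hy1
  · intro hAB
    rw [mem_closure_iff]
    intro o ho hAo
    exact ⟨B, hoare_open_upward ho hAB hAo, rfl⟩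

/-- The Hoare power space of any `T0` space is sober: every irreducible closed subset
is the closure of a unique point. -/
theorem hoare_power_space_sober {X : Type*} [TopologicalSpace X] [T0Space X] :
    ∀ 𝒜 : Set (HoarePS X), IsClosed 𝒜 → IsIrredNL 𝒜 →
      ∃! B : HoarePS X, 𝒜 = closure {B} := by
  intro 𝒜 hcl hirr
  have hirr' : IsIrreducible 𝒜 :=
    ⟨hirr.1, isPreirreducible_iff_isClosed_union_isClosed.mpr hirr.2⟩
  set U0 : Set X := ⋃ A ∈ 𝒜, A.1 with hU0
  obtain ⟨A₀, hA₀⟩ := hirr.1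
  have hne : (closure U0).Nonempty := by
    obtain ⟨x, hx⟩ := A₀.2.2
    exact ⟨x, subset_closure (Set.mem_biUnion hA₀ hx)⟩
  set B : HoarePS X := ⟨closure U0, isClosed_closure, hne⟩ with hBdef
  -- B ∈ 𝒜
  have hBmem : B ∈ 𝒜 := by
    by_contra hB
    have hBo : B ∈ 𝒜ᶜ := hB
    have hbasis := TopologicalSpace.isTopologicalBasis_of_subbasis
      (rfl : (inferInstance : TopologicalSpace (HoarePS X)) = _)
    obtain ⟨t, ⟨f, ⟨hfin, hsub⟩, rfl⟩, hBt, hts⟩ :=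
      hbasis.exists_subset_of_mem_open hBo hcl.isOpen_compl
    -- 𝒜 is covered by the complements of the members of f
    have hcover : 𝒜 ⊆ ⋃₀ ((fun s => sᶜ) '' f) := by
      intro A hA
      by_contra hA'
      simp only [Set.mem_sUnion, Set.mem_image, not_exists, not_and] at hA'
      have : A ∈ ⋂₀ f := by
        intro s hs
        by_contra h
        exact hA' sᶜ ⟨s, hs, rfl⟩ h
      exact hts this hA
    have hZfin : ((fun s : Set (HoarePS X) => sᶜ) '' f).Finite := hfin.image _
    have hZclosed : ∀ z ∈ (fun s : Set (HoarePS X) => sᶜ) '' f, IsClosed z := by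
      rintro z ⟨s, hs, rfl⟩
      exact (show IsOpen s from TopologicalSpace.GenerateOpen.basic s (hsub hs)).isClosed_compl
    rw [isIrreducible_iff_sUnion_isClosed] at hirr'
    obtain ⟨z, hz, hAz⟩ :=
      hirr' hZfin.toFinset (by simpa using hZclosed) (by simpa using hcover)
    rw [Set.Finite.mem_toFinset] at hz
    obtain ⟨s, hs, rfl⟩ := hz
    -- B ∈ s, s = ◇U for some open U, so closure U0 meets U, so some A ∈ 𝒜 meets U
    obtain ⟨U, hUo, rfl⟩ := hsub hs
    have hBs : (B.1 ∩ U).Nonempty := hBt _ hs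
    obtain ⟨x, hx1, hx2⟩ := hBs
    have : (U0 ∩ U).Nonempty := by
      have := mem_closure_iff.mp hx1 U hUo hx2
      exact this.imp fun y hy => ⟨hy.2, hy.1⟩
    obtain ⟨y, hy1, hy2⟩ := this
    obtain ⟨A, hA, hyA⟩ := by simpa [hU0] using hy1
    exact hAz hA ⟨y, hyA, hy2⟩
  refine ⟨B, ?_, ?_⟩
  · show 𝒜 = closure {B}
    rw [hoare_closure_singleton]
    apply Set.eq_of_subset_of_subset
    · intro A hA
      exact (Set.subset_biUnion_of_mem hA).trans subset_closure
    · intro A hA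
      have : A ∈ closure {B} := by rw [hoare_closure_singleton]; exact hA
      have := closure_mono (Set.singleton_subset_iff.mpr hBmem) this
      rwa [hcl.closure_eq] at this
  · intro B' hB'
    have h1 : B' ∈ 𝒜 := hB' ▸ subset_closure rfl
    have h2 : 𝒜 = closure {B} := by
      rw [hoare_closure_singleton]
      apply Set.eq_of_subset_of_subset
      · intro A hA
        exact (Set.subset_biUnion_of_mem hA).trans subset_closure
      · intro A hA
        have : A ∈ closure {B} := by rw [hoare_closure_singleton]; exact hA
        have := closure_mono (Set.singleton_subset_iff.mpr hBmem) this
        rwa [hcl.closure_eq] at this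
    have hBB' : B.1 ⊆ B'.1 := by
      have : B ∈ closure {B'} := hB' ▸ hBmem
      rwa [hoare_closure_singleton] at this
    have hB'B : B'.1 ⊆ B.1 := by
      have : B' ∈ closure {B} := h2 ▸ h1
      rwa [hoare_closure_singleton] at this
    exact Subtype.ext (Set.eq_of_subset_of_subset hB'B hBB')
end
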